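/- arXiv:math/9210219 — 6 statements merged into one kernel-verified Lean document; each statement's English description precedes it below -/
import Mathlib

section
/- Let G and H be finite groups and f : G → H a bijection such that for all g, h ∈ G, f(gh) = f(g)f(h) or f(gh) = f(h)f(g). Then f is either a group isomorphism or a group anti-isomorphism. -/
theorem stmt_0 {G H : Type*} [Group G] [Group H] [Finite G] [Finite H]
    (f : G → H) (hf : Function.Bijective f)
    (h : ∀ g h : G, f (g * h) = f g * f h ∨ f (g * h) = f h * f g) :
    (∀ g h : G, f (g * h) = f g * f h) ∨ (∀ g h : G, f (g * h) = f h * f g) := by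
  have finj := hf.1
  have hsq : ∀ x : G, f (x * x) = f x * f x := fun x => (h x x).elim id id
  -- half of Lemma C
  have key : ∀ x y : G, x * y = y * x → f (x * y) = f x * f y →
      f x * f y = f y * f x := by
    intro x y hxy hv
    by_contra hne
    have e2 : f (x * x * y) = f x * (f x * f y) := by
      rcases h x (x * y) with h1 | h1
      · rw [← mul_assoc] at h1; rw [h1, hv]
      · exfalso
        rw [← mul_assoc, hv] at h1
        rcases h (x * x) y with h2 | h2
        · rw [hsq x, h1] at h2
          simp only [mul_assoc, mul_right_inj] at h2
          exact hne h2.symm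
        · rw [hsq x, h1] at h2
          simp only [← mul_assoc, mul_left_inj] at h2
          exact hne h2
    have e3 : f ((x * y) * (x * y)) = (f x * f y) * (f x * f y) := by
      rw [hsq (x * y), hv]
    rw [show (x * y) * (x * y) = (x * x * y) * y by
      rw [show (x*y)*(x*y) = x*(y*x)*y by group, ← hxy]; group] at e3
    rcases h (x * x * y) y with h3 | h3 <;> rw [e2] at h3 <;> rw [h3] at e3
    · -- e3 : f x * (f x * f y) * f y = (f x * f y) * (f x * f y)
      apply hne
      have e3' := e3.symm
      simp only [mul_assoc, mul_right_inj] at e3'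
      simp only [← mul_assoc, mul_left_inj] at e3'
      exact e3'.symm
    · -- e3 : f y * (f x * (f x * f y)) = (f x * f y) * (f x * f y)
      apply hne
      have e3' := e3.symm
      simp only [← mul_assoc, mul_left_inj] at e3'
      exact e3'
  -- Lemma C: commuting elements have commuting images
  have comm : ∀ x y : G, x * y = y * x → f x * f y = f y * f x := by
    intro x y hxy
    rcases h x y with hv | hv
    · exact key x y hxy hv
    · exact (key y x hxy.symm (by rw [← hxy]; exact hv)).symm
  -- converse of Lemma C
  have comm' : ∀ x y : G, f x * f y = f y * f x → x * y = y * x := by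
    intro x y hc
    have h1 : f (x * y) = f x * f y := (h x y).elim id (fun e => e.trans hc.symm)
    have h2 : f (y * x) = f x * f y := (h y x).elim (fun e => e.trans hc.symm) id
    exact finj (h1.trans h2.symm)
  -- swap lemma
  have swap : ∀ x y : G, f (x * y) = f x * f y → f x * f y ≠ f y * f x →
      f (y * x) = f y * f x := by
    intro x y hv hne
    rcases h y x with e | e
    · exact e
    · exfalso
      have : y * x = x * y := finj (e.trans hv.symm)
      exact hne (comm x y this.symm)
  -- core purity contradiction
  have core : ∀ a y z : G, f (a * y) = f a * f y → f a * f y ≠ f y * f a →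
      f (a * z) = f z * f a → f a * f z ≠ f z * f a → False := by
    intro a y z hay hyne haz hzne
    have hya : f (y * a) = f y * f a := swap a y hay hyne
    have hza : f (z * a) = f a * f z := by
      rcases h z a with e | e
      · exfalso
        have : z * a = a * z := finj (e.trans haz.symm)
        exact hzne (comm a z this.symm)
      · exact e
    -- dagger : f y * f a * f z = f z * f a * f y
    have dag : f y * f a * f z = f z * f a * f y := by
      rcases h (y * a) z with e1 | e1 <;> rw [hya] at e1
      · rcases h y (a * z) with e2 | e2 <;> rw [haz] at e2 <;>
          rw [show y * (a * z) = y * a * z by group, e1] at e2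
        · -- e2 : f y * f a * f z = f y * (f z * f a)
          exfalso; apply hzne
          simp only [mul_assoc, mul_right_inj] at e2
          exact e2
        · -- e2 : f y * f a * f z = f z * f a * f y
          simpa [mul_assoc] using e2
      · rcases h y (a * z) with e2 | e2 <;> rw [haz] at e2 <;>
          rw [show y * (a * z) = y * a * z by group, e1] at e2
        · -- e2 : f z * (f y * f a) = f y * (f z * f a) : get c3
          have c3 : f z * f y = f y * f z := by
            have e2' := e2
            simp only [← mul_assoc, mul_left_inj] at e2'
            exact e2'
          have hyz : y * z = z * y := comm' y z c3.symm
          have hfyz : f (y * z) = f y * f z := (h y z).elim id (fun e => e.trans c3)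
          have E1 : f (a * (y * z)) = f a * (f y * f z) := by
            rcases h a (y * z) with e3 | e3 <;> rw [hfyz] at e3
            · exact e3
            · rcases h (a * y) z with e4 | e4 <;> rw [hay] at e4 <;>
                rw [show a * y * z = a * (y * z) by group] at e4
              · exact e4.trans (mul_assoc _ _ _)
              · exfalso; apply hyne
                have e5 := e3.symm.trans e4
                -- e5 : f y * f z * f a = f z * (f a * f y)
                rw [← c3] at e5
                simp only [mul_assoc, mul_right_inj] at e5
                exact e5.symm
          rcases h z (a * y) with e6 | e6 <;> rw [hay] at e6
          · rcases h (z * a) y with e7 | e7 <;> rw [hza] at e7 <;>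
              rw [show z * a * y = z * (a * y) by group, e6] at e7
            · -- e7 : f z * (f a * f y) = f a * f z * f y
              exfalso; apply hzne
              simp only [← mul_assoc, mul_left_inj] at e7
              exact e7.symm
            · -- e7 : f z * (f a * f y) = f y * (f a * f z) : gives dagger
              simp only [← mul_assoc] at e7
              exact e7.symm
          · -- e6 : f (z * (a * y)) = f a * f y * f z : injectivity contradiction
            exfalso
            have heq : z * (a * y) = a * (y * z) := finj (by rw [e6, E1, mul_assoc])
            apply hzne
            have h9 : z * a * y = a * z * y := by
              rw [show z * a * y = z * (a * y) by group, heq, hyz]; group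
            exact ((comm z a (mul_right_cancel h9))).symm
        · -- e2 : f z * (f y * f a) = f z * f a * f y : combo (4)
          exfalso; apply hyne
          simp only [mul_assoc, mul_right_inj] at e2
          exact e2.symm
    -- E2 : f (a * (a * z)) = f z * (f a * f a)
    have E2 : f (a * (a * z)) = f z * (f a * f a) := by
      rcases h a (a * z) with e | e <;> rw [haz] at e
      · exfalso
        rcases h (a * a) z with e2 | e2 <;> rw [hsq a] at e2 <;>
          rw [show a * a * z = a * (a * z) by group, e] at e2
        · -- e2 : f a * (f z * f a) = f a * f a * f z
          apply hzne
          simp only [mul_assoc, mul_right_inj] at e2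
          exact e2.symm
        · -- e2 : f a * (f z * f a) = f z * (f a * f a)
          apply hzne
          simp only [← mul_assoc, mul_left_inj] at e2
          exact e2
      · exact e.trans (mul_assoc _ _ _)
    -- value of f ((y*a)*(a*z))
    have V : f ((y * a) * (a * z)) = f y * f a * (f z * f a) := by
      rcases h (y * a) (a * z) with e | e <;> rw [hya, haz] at e
      · exact e
      · rw [e]
        calc f z * f a * (f y * f a) = (f z * f a * f y) * f a := by group
          _ = (f y * f a * f z) * f a := by rw [dag]
          _ = f y * f a * (f z * f a) := by group
    rcases h y (a * (a * z)) with e | e <;> rw [E2] at e <;>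
      rw [show y * (a * (a * z)) = (y * a) * (a * z) by group, V] at e
    · -- e : f y * f a * (f z * f a) = f y * (f z * (f a * f a))
      apply hzne
      simp only [mul_assoc, mul_right_inj] at e
      simp only [← mul_assoc, mul_left_inj] at e
      exact e
    · -- e : f y * f a * (f z * f a) = f z * (f a * f a) * f y
      apply hyne
      have e' : f z * f a * f y * f a = f z * (f a * f a) * f y := by
        calc f z * f a * f y * f a = f y * f a * f z * f a := by rw [dag]
          _ = f y * f a * (f z * f a) := by group
          _ = f z * (f a * f a) * f y := e
      simp only [mul_assoc, mul_right_inj] at e'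
      exact e'.symm
  -- purity
  have purity : ∀ a : G, (∀ y, f (a * y) = f a * f y) ∨ (∀ y, f (a * y) = f y * f a) := by
    intro a
    by_contra hc
    push_neg at hc
    obtain ⟨⟨y, hy⟩, z, hz⟩ := hc
    have hay : f (a * y) = f y * f a := (h a y).resolve_left hy
    have hyne : f a * f y ≠ f y * f a := fun e => hy (hay.trans e.symm)
    have haz : f (a * z) = f a * f z := (h a z).resolve_right hz
    have hzne : f a * f z ≠ f z * f a := fun e => hz (haz.trans e)
    exact core a z y haz hzne hay hyne
  -- f 1 = 1 and f of inverses
  have f1 : f (1 : G) = 1 := by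
    have := hsq 1
    rw [mul_one] at this
    exact (left_eq_mul.mp this)
  have finv : ∀ x : G, f x⁻¹ = (f x)⁻¹ := by
    intro x
    have exx : x * x⁻¹ = (1 : G) := by group
    rcases h x x⁻¹ with e2 | e2 <;> rw [exx, f1] at e2
    · exact eq_inv_of_mul_eq_one_right e2.symm
    · exact eq_inv_of_mul_eq_one_left e2.symm
  -- closure lemmas
  have Amul : ∀ a b : G, (∀ y, f (a * y) = f a * f y) → (∀ y, f (b * y) = f b * f y) →
      ∀ y, f (a * b * y) = f (a * b) * f y := by
    intro a b ha hb y
    rw [show a * b * y = a * (b * y) by group, ha, hb, ha b, mul_assoc]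
  have Ainv : ∀ a : G, (∀ y, f (a * y) = f a * f y) →
      ∀ y, f (a⁻¹ * y) = f a⁻¹ * f y := by
    intro a ha y
    have := ha (a⁻¹ * y)
    rw [show a * (a⁻¹ * y) = y by group] at this
    rw [finv a]
    rw [this]
    group
  have Bmul : ∀ a b : G, (∀ y, f (a * y) = f y * f a) → (∀ y, f (b * y) = f y * f b) →
      ∀ y, f (a * b * y) = f y * f (a * b) := by
    intro a b ha hb y
    rw [show a * b * y = a * (b * y) by group, ha, hb, ha b, mul_assoc]
  have Binv : ∀ a : G, (∀ y, f (a * y) = f y * f a) →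
      ∀ y, f (a⁻¹ * y) = f y * f a⁻¹ := by
    intro a ha y
    have := ha (a⁻¹ * y)
    rw [show a * (a⁻¹ * y) = y by group] at this
    rw [finv a, this]
    group
  -- final assembly
  by_contra hcon
  push_neg at hcon
  obtain ⟨⟨g0, k0, hP⟩, g1, k1, hQ⟩ := hcon
  have hB0 : ∀ y, f (g0 * y) = f y * f g0 := by
    rcases purity g0 with hA | hB
    · exact absurd (hA k0) hP
    · exact hB
  have hA1 : ∀ y, f (g1 * y) = f g1 * f y := by
    rcases purity g1 with hA | hB
    · exact hA
    · exact absurd (hB k1) hQ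
  rcases purity (g1 * g0) with hAc | hBc
  · -- then g0 is pure-hom, contradiction
    apply hP
    have := Amul g1⁻¹ (g1 * g0) (Ainv g1 hA1) hAc k0
    rw [show g1⁻¹ * (g1 * g0) = g0 by group] at this
    exact this
  · apply hQ
    have := Bmul (g1 * g0) g0⁻¹ hBc (Binv g0 hB0) k1
    rw [show g1 * g0 * g0⁻¹ = g1 by group] at this
    exact this
end

section
/- Let G and H be finite groups and f : G → H a bijection such that for all g, h ∈ G, f(gh) = f(g)f(h) or f(gh) = f(h)f(g). Then G and H are isomorphic as groups. -/
open Function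

section half

variable {G H : Type*} [Group G] [Group H] {f : G → H}

private lemma half_sq (h : ∀ g h' : G, f (g * h') = f g * f h' ∨ f (g * h') = f h' * f g)
    (y : G) : f (y * y) = f y * f y := by
  rcases h y y with h' | h' <;> exact h'

private lemma half_comm_aux (h : ∀ g h' : G, f (g * h') = f g * f h' ∨ f (g * h') = f h' * f g)
    {x y : G} (hc : x * y = y * x) (hxy : f (x * y) = f x * f y) :
    f x * f y = f y * f x := by
  by_contra ne
  have e1 : f (x * y * y) = f x * (f y * f y) := by
    rcases h (x * y) y with h1 | h1
    · rw [h1, hxy, mul_assoc]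
    · exfalso
      rw [hxy] at h1
      have hx : x * y * y = x * (y * y) := mul_assoc ..
      rcases h x (y * y) with h2 | h2 <;> rw [half_sq h y] at h2 <;>
        rw [← hx] at h2 <;> have e := h1.symm.trans h2
      · -- f y * (f x * f y) = f x * (f y * f y)
        rw [← mul_assoc, ← mul_assoc] at e
        exact ne (mul_right_cancel e).symm
      · -- f y * (f x * f y) = (f y * f y) * f x
        rw [mul_assoc] at e
        exact ne (mul_left_cancel e)
  have e2 : f (x * y * (x * y)) = f x * f y * (f x * f y) := by
    rw [half_sq h (x * y), hxy]
  have hel : x * y * (x * y) = x * (x * y * y) := by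
    calc x * y * (x * y) = x * (y * x * y) := by
          rw [mul_assoc, ← mul_assoc y x y]
      _ = x * (x * y * y) := by rw [← hc]
  rcases h x (x * y * y) with h2 | h2 <;> rw [e1, ← hel, e2] at h2
  · -- f x * f y * (f x * f y) = f x * (f x * (f y * f y))
    rw [mul_assoc] at h2
    have c1 := mul_left_cancel h2
    rw [← mul_assoc, ← mul_assoc] at c1
    exact ne (mul_right_cancel c1).symm
  · -- f x * f y * (f x * f y) = f x * (f y * f y) * f x
    rw [mul_assoc, mul_assoc, mul_assoc] at h2
    exact ne (mul_left_cancel (mul_left_cancel h2))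
  
private lemma half_comm (h : ∀ g h' : G, f (g * h') = f g * f h' ∨ f (g * h') = f h' * f g)
    {x y : G} (hc : x * y = y * x) : f x * f y = f y * f x := by
  rcases h x y with hxy | hxy
  · exact half_comm_aux h hc hxy
  · rw [hc] at hxy
    exact (half_comm_aux h hc.symm hxy).symm

private lemma half_comm' (h : ∀ g h' : G, f (g * h') = f g * f h' ∨ f (g * h') = f h' * f g)
    (hinj : Injective f) {x y : G} (hH : f x * f y = f y * f x) : x * y = y * x := by
  apply hinj
  rcases h x y with h1 | h1 <;> rcases h y x with h2 | h2 <;> rw [h1, h2] <;>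
    first | rfl | exact hH | exact hH.symm

end half

section half2

variable {G H : Type*} [Group G] [Group H] {f : G → H}

/-- If `f(bac) = BAC` and `bac = cab` in `G`, we get a contradiction. -/
private lemma final_blow (h : ∀ g h' : G, f (g * h') = f g * f h' ∨ f (g * h') = f h' * f g)
    {a b c : G}
    (hab : f (a * b) = f a * f b) (hac : f (a * c) = f c * f a)
    (nab : f a * f b ≠ f b * f a) (nac : f a * f c ≠ f c * f a)
    (hbac : f (b * a * c) = f b * f a * f c) (hG : b * a * c = c * a * b) : False := by
  have hcomm2 : a * b * (a * c) = a * c * (a * b) := by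
    have e := congrArg (a * ·) hG
    simp only [← mul_assoc] at e
    simp only [← mul_assoc]
    exact e
  have hH2 : f (a * b) * f (a * c) = f (a * c) * f (a * b) := half_comm h hcomm2
  rw [hab, hac] at hH2
  -- hH2 : f a * f b * (f c * f a) = f c * f a * (f a * f b)
  have harg : a * (b * a * c) = a * b * (a * c) := by simp only [mul_assoc]
  have e0 : f (a * (b * a * c)) = f a * f b * (f c * f a) := by
    rw [harg]
    rcases h (a * b) (a * c) with h' | h' <;> rw [hab, hac] at h'
    · exact h'
    · exact h'.trans hH2.symm
  rcases h a (b * a * c) with h' | h' <;> rw [hbac] at h' <;> have e := e0.symm.trans h'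
  · -- f a * f b * (f c * f a) = f a * (f b * f a * f c)
    simp only [mul_assoc] at e
    have c1 := mul_left_cancel (mul_left_cancel e)
    exact nac c1.symm
  · -- f a * f b * (f c * f a) = f b * f a * f c * f a
    simp only [← mul_assoc] at e
    exact nab (mul_right_cancel (mul_right_cancel e))

private lemma elem_dichotomy (h : ∀ g h' : G, f (g * h') = f g * f h' ∨ f (g * h') = f h' * f g)
    (hinj : Injective f) (a : G) :
    (∀ b, f (a * b) = f a * f b) ∨ (∀ b, f (a * b) = f b * f a) := by
  by_contra hcon
  push_neg at hcon
  obtain ⟨⟨c, hc0⟩, ⟨b, hb0⟩⟩ := hcon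
  -- b : hom-strict witness, c : anti-strict witness
  have hab : f (a * b) = f a * f b := (h a b).resolve_right hb0
  have nab : f a * f b ≠ f b * f a := by rw [← hab]; exact hb0
  have hac : f (a * c) = f c * f a := (h a c).resolve_left hc0
  have nac : f a * f c ≠ f c * f a := fun e => hc0 (by rw [hac, ← e])
  have hgab : a * b ≠ b * a := fun e => nab (half_comm h e)
  have hgac : a * c ≠ c * a := fun e => nac (half_comm h e)
  have hba : f (b * a) = f b * f a := by
    rcases h b a with h' | h'
    · exact h'
    · exact absurd (hinj (h'.trans hab.symm)).symm hgab
  have hca : f (c * a) = f a * f c := by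
    rcases h c a with h' | h'
    · exact absurd (hinj (h'.trans hac.symm)).symm hgac
    · exact h'
  -- value of f (b*a*c)
  -- options: (fb*fa)*fc (with BAC = CAB), or fc*(fb*fa) (only possible if CB = BC)
  have hbacv : (f (b * a * c) = f b * f a * f c ∧ f b * f a * f c = f c * f a * f b)
      ∨ (f (b * a * c) = f c * (f b * f a) ∧ f c * f b = f b * f c) := by
    have h2 : f (b * (a * c)) = f b * (f c * f a) ∨ f (b * (a * c)) = f c * f a * f b := by
      rcases h b (a * c) with h' | h' <;> rw [hac] at h'
      · exact Or.inl h'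
      · exact Or.inr h'
    rw [← mul_assoc] at h2
    rcases h (b * a) c with h1 | h1 <;> rw [hba] at h1 <;>
      rcases h2 with h2 | h2 <;> have e := h1.symm.trans h2
    · -- BAC = B(CA) : fa*fc = fc*fa, contradiction
      rw [mul_assoc] at e
      exact absurd (mul_left_cancel e) nac
    · exact Or.inl ⟨h1, e⟩
    · -- C(BA) = B(CA) : cb comm
      refine Or.inr ⟨h1, ?_⟩
      rw [← mul_assoc, ← mul_assoc] at e
      have := mul_right_cancel e
      -- this : f c * f b = f b * f c
      exact this
    · -- C(BA) = (CA)B : ba = ab contradiction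
      rw [mul_assoc] at e
      exact absurd (mul_left_cancel e) (fun e' => nab e'.symm)
  -- value of f (c*a*b)
  have hcabv : (f (c * a * b) = f c * (f a * f b) ∧ f b * (f a * f c) = f c * (f a * f b))
      ∨ (f (c * a * b) = f a * f b * f c ∧ f c * f b = f b * f c) := by
    have h2 : f (c * (a * b)) = f c * (f a * f b) ∨ f (c * (a * b)) = f a * f b * f c := by
      rcases h c (a * b) with h' | h' <;> rw [hab] at h'
      · exact Or.inl h'
      · exact Or.inr h'
    rw [← mul_assoc] at h2
    rcases h (c * a) b with h1 | h1 <;> rw [hca] at h1 <;>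
      rcases h2 with h2 | h2 <;> have e := h1.symm.trans h2
    · -- (AC)B = C(AB) : ac comm, contradiction
      rw [← mul_assoc] at e
      exact absurd (mul_right_cancel e) nac
    · -- (AC)B = (AB)C : cb comm
      refine Or.inr ⟨h2, ?_⟩
      simp only [mul_assoc] at e
      have := mul_left_cancel e
      -- this : f c * f b = f b * f c
      exact this
    · exact Or.inl ⟨h2, e⟩
    · -- B(AC) = (AB)C : ba = ab, contradiction
      simp only [← mul_assoc] at e
      exact absurd (mul_right_cancel e) (fun e' => nab e'.symm)
  by_cases hbc : b * c = c * b
  · -- commuting case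
    have hBC : f b * f c = f c * f b := half_comm h hbc
    have fbc : f (b * c) = f b * f c := by
      rcases h b c with h' | h'
      · exact h'
      · exact h'.trans hBC.symm
    -- value of f (a*b*c)
    have habcv : (f (a * b * c) = f a * f b * f c ∧ f a * f b * f c = f b * (f c * f a))
        ∨ (f (a * b * c) = f c * (f a * f b) ∧ f c * (f a * f b) = f b * f c * f a) := by
      have harg2 : a * b * c = a * c * b := by
        rw [mul_assoc, hbc, ← mul_assoc]
      have h2 : f (a * c * b) = f c * f a * f b ∨ f (a * c * b) = f b * (f c * f a) := by
        rcases h (a * c) b with h' | h' <;> rw [hac] at h'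
        · exact Or.inl h'
        · exact Or.inr h'
      rw [← harg2] at h2
      have h3 : f (a * (b * c)) = f a * (f b * f c) ∨ f (a * (b * c)) = f b * f c * f a := by
        rcases h a (b * c) with h' | h' <;> rw [fbc] at h'
        · exact Or.inl h'
        · exact Or.inr h'
      rw [← mul_assoc] at h3
      rcases h (a * b) c with h1 | h1 <;> rw [hab] at h1
      · -- v = ABC; use h2
        rcases h2 with h2 | h2 <;> have e := h1.symm.trans h2
        · -- ABC = CAB, contra using hBC: CAB = ACB forces AC=CA
          exfalso
          -- e : f a * f b * f c = f c * f a * f b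
          -- rewrite ABC = ACB via hBC
          rw [mul_assoc, hBC, ← mul_assoc] at e
          -- e : f a * f c * f b = f c * f a * f b
          exact nac (mul_right_cancel e)
        · -- ABC = B(CA)
          exact Or.inl ⟨h1, e⟩
      · -- v = CAB; use h3
        rcases h3 with h3 | h3 <;> have e := h1.symm.trans h3
        · -- CAB = A(BC) contra
          exfalso
          rw [hBC, ← mul_assoc, ← mul_assoc] at e
          exact nac (mul_right_cancel e).symm
        · exact Or.inr ⟨h1, e⟩
    rcases habcv with ⟨hv, hrel⟩ | ⟨hv, hrel⟩
    · -- case α : v = ABC = BCA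
      rcases hbacv with ⟨hw, hS2⟩ | ⟨hw, _⟩
      · -- w = BAC with BAC = CAB; determine f(cab)
        rcases hcabv with ⟨hu, _⟩ | ⟨hu, _⟩
        · -- f(cab) = CAB = BAC = w
          have : f (b * a * c) = f (c * a * b) := by
            rw [hw, hu, hS2, mul_assoc]
          exact final_blow h hab hac nab nac hw (hinj this)
        · -- f(cab) = ABC = v ⇒ cab = abc ⇒ c comm ab ⇒ contra
          have : f (c * a * b) = f (a * b * c) := by rw [hu, hv]
          have hgc : c * (a * b) = a * b * c := by
            rw [← mul_assoc]; exact hinj this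
          have hc2 := half_comm h hgc
          rw [hab] at hc2
          -- hc2 : f c * (f a * f b) = f a * f b * f c
          rw [mul_assoc, hBC, ← mul_assoc, ← mul_assoc] at hc2
          exact nac (mul_right_cancel hc2).symm
      · -- w = C(BA) = (CB)A = (BC)A = BCA = v
        have : f (b * a * c) = f (a * b * c) := by
          rw [hw, hv, hrel, ← mul_assoc, ← mul_assoc, hBC]
        exact absurd (mul_right_cancel (hinj this)) (fun e' => nab (half_comm h e').symm)
    · -- case β : v = CAB = BCA
      rcases hbacv with ⟨hw, hS2⟩ | ⟨hw, _⟩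
      · -- w = BAC = CAB = v
        have : f (b * a * c) = f (a * b * c) := by
          rw [hw, hv, hS2, mul_assoc]
        exact absurd (mul_right_cancel (hinj this)) (fun e' => nab (half_comm h e').symm)
      · -- w = C(BA) = BCA = v
        have : f (b * a * c) = f (a * b * c) := by
          rw [hw, hv, hrel, ← mul_assoc, hBC]
        exact absurd (mul_right_cancel (hinj this)) (fun e' => nab (half_comm h e').symm)
  · -- non-commuting case
    have nbc : f b * f c ≠ f c * f b := fun e => hbc (half_comm' h hinj e)
    rcases hbacv with ⟨hw, hS2⟩ | ⟨_, hcb⟩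
    · rcases hcabv with ⟨hu, _⟩ | ⟨_, hcb⟩
      · have : f (b * a * c) = f (c * a * b) := by
          rw [hw, hu, hS2, mul_assoc]
        exact final_blow h hab hac nab nac hw (hinj this)
      · exact nbc hcb.symm
    · exact nbc hcb.symm

end half2

section half3

variable {G H : Type*} [Group G] [Group H] {f : G → H}

private lemma global_dichotomy (h : ∀ g h' : G, f (g * h') = f g * f h' ∨ f (g * h') = f h' * f g)
    (hf : Bijective f) :
    (∀ x y, f (x * y) = f x * f y) ∨ (∀ x y, f (x * y) = f y * f x) := by
  obtain ⟨hinj, hsurj⟩ := hf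
  by_contra hcon
  push_neg at hcon
  obtain ⟨⟨a, b, hb⟩, ⟨c, d, hd⟩⟩ := hcon
  have ha : ∀ x, f (a * x) = f x * f a :=
    (elem_dichotomy h hinj a).resolve_left fun hh => hb (hh b)
  have hcc : ∀ x, f (c * x) = f c * f x :=
    (elem_dichotomy h hinj c).resolve_right fun hh => hd (hh d)
  rcases elem_dichotomy h hinj (c * a) with hca | hca
  · -- f a is central
    have hcent : ∀ yH : H, f a * yH = yH * f a := by
      intro yH
      obtain ⟨x, rfl⟩ := hsurj yH
      have e1 := hca x
      rw [hcc a] at e1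
      -- e1 : f (c * a * x) = f c * f a * f x
      have e2 : f (c * a * x) = f c * (f x * f a) := by
        rw [mul_assoc, hcc (a * x), ha x]
      have e := e1.symm.trans e2
      rw [mul_assoc] at e
      exact mul_left_cancel e
    exact hb (by rw [ha b, ← hcent (f b)])
  · -- f c is central
    have hcent : ∀ yH : H, f c * yH = yH * f c := by
      intro yH
      obtain ⟨x, rfl⟩ := hsurj yH
      have e1 := hca x
      rw [hcc a] at e1
      -- e1 : f (c * a * x) = f x * (f c * f a)
      have e2 : f (c * a * x) = f c * (f x * f a) := by
        rw [mul_assoc, hcc (a * x), ha x]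
      have e := e1.symm.trans e2
      rw [← mul_assoc, ← mul_assoc] at e
      exact (mul_right_cancel e).symm
    exact hd (by rw [hcc d, hcent (f d)])

end half3

theorem stmt_1 {G H : Type*} [Group G] [Group H] [Finite G] [Finite H]
    (f : G → H) (hf : Function.Bijective f)
    (h : ∀ g h : G, f (g * h) = f g * f h ∨ f (g * h) = f h * f g) :
    Nonempty (G ≃* H) := by
  rcases global_dichotomy h hf with hm | hm
  · exact ⟨MulEquiv.ofBijective (MonoidHom.mk' f fun x y => hm x y) hf⟩
  · refine ⟨(MulEquiv.ofBijective
      (MonoidHom.mk' (fun g => MulOpposite.op (f g)) fun x y => ?_) ?_).trans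
      (MulEquiv.inv' H).symm⟩
    · show MulOpposite.op (f (x * y)) = MulOpposite.op (f x) * MulOpposite.op (f y)
      rw [hm x y]
      rfl
    · exact MulOpposite.opEquiv.bijective.comp hf
end

section
/- If χ is the character of a 2-dimensional complex representation of a finite group G, then the 3-character of χ vanishes identically: χ(g)χ(h)χ(m) − χ(g)χ(hm) − χ(h)χ(gm) − χ(m)χ(gh) + χ(ghm) + χ(gmh) = 0 for all g, h, m ∈ G. -/
lemma trace_id_2x2 (A B C : Matrix (Fin 2) (Fin 2) ℂ) :
    A.trace * B.trace * C.trace - A.trace * (B * C).trace - B.trace * (A * C).trace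
      - C.trace * (A * B).trace + (A * B * C).trace + (A * C * B).trace = 0 := by
  simp [Matrix.trace, Matrix.mul_apply, Fin.sum_univ_two]
  ring

theorem stmt_5 {G : Type*} [Group G] [Finite G]
    (ρ : G →* GL (Fin 2) ℂ) (χ : G → ℂ)
    (hχ : ∀ g : G, χ g = Matrix.trace (ρ g : Matrix (Fin 2) (Fin 2) ℂ)) :
    ∀ g h m : G,
      χ g * χ h * χ m - χ g * χ (h * m) - χ h * χ (g * m) - χ m * χ (g * h)
        + χ (g * h * m) + χ (g * m * h) = 0 := by
  intro g h m
  simp only [hχ, map_mul, Units.val_mul]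
  exact trace_id_2x2 _ _ _
end

section
/- Let χ_i and χ_j be distinct irreducible complex characters of a finite group G. Then their 2-characters are orthogonal: ∑_{(g,h) ∈ G×G} (χ_i(g)χ_i(h) − χ_i(gh)) · conj(χ_j(g)χ_j(h) − χ_j(gh)) = 0. -/
/-!
Since `conj (χ_W u) = χ_W u⁻¹` (the eigenvalues of `ρ_W u` are roots of unity), the conjugate of
the 2-character of `W` at `(g, h)` is its 2-character at `(h⁻¹, g⁻¹)`. Expanding, for each fixed
`g` the sum over `h` splits into four sums of the form `∑ₕ χ_V (y h) χ_W (h⁻¹ x)`. Each of these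
is the trace of `(ρ_V y ⊗ (ρ_W x)ᵀ) ∘ ∑ₕ (ρ_V ⊗ ρ_W*) h`, and `∑ₕ (ρ_V ⊗ ρ_W*) h = 0` because,
by orthogonality of characters, `V ⊗ W*` has no nonzero invariants.
-/

open FDRep

open Module ComplexConjugate

namespace Module.End

theorem isSemisimple_of_pow_eq_one {K V : Type*} [Field K] [CharZero K] [AddCommGroup V]
    [Module K V] {f : End K V} {n : ℕ} (hn : n ≠ 0) (hf : f ^ n = 1) : f.IsSemisimple := by
  refine isSemisimple_of_squarefree_aeval_eq_zero (p := Polynomial.X ^ n - 1) ?_ (by simp [hf])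
  simpa using (Polynomial.separable_X_pow_sub_C (1 : K) (Nat.cast_ne_zero.mpr hn)
    one_ne_zero).squarefree

theorem trace_eq_sum_eigenvalues_of_mem_eigenspace {K V : Type*} [Field K] [AddCommGroup V]
    [Module K V] [FiniteDimensional K V] {f g : End K V}
    (hf : ⨆ μ, f.eigenspace μ = ⊤) (c : K → K)
    (hg : ∀ μ, ∀ x ∈ f.eigenspace μ, g x = c μ • x) :
    LinearMap.trace K V g = ∑ μ : f.Eigenvalues, c μ * finrank K (f.eigenspace μ) := by
  classical
  have hint : DirectSum.IsInternal fun μ : f.Eigenvalues => f.eigenspace μ :=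
    DirectSum.isInternal_ne_bot_iff.mpr <|
      DirectSum.isInternal_submodule_of_iSupIndep_of_iSup_eq_top f.eigenspaces_iSupIndep hf
  have hmaps (μ : f.Eigenvalues) : Set.MapsTo g (f.eigenspace μ) (f.eigenspace μ) := fun x hx => by
    rw [SetLike.mem_coe, hg μ x hx]
    exact Submodule.smul_mem _ _ hx
  rw [LinearMap.trace_eq_sum_trace_restrict hint hmaps]
  refine Finset.sum_congr rfl fun μ _ => ?_
  have : g.restrict (hmaps μ) = c μ • 1 := LinearMap.ext fun x => Subtype.ext (hg μ x x.2)
  rw [this, map_smul, LinearMap.trace_one, smul_eq_mul]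

end Module.End

theorem LinearMap.trace_eq_conj_trace_of_pow_eq_one {V : Type*} [AddCommGroup V] [Module ℂ V]
    [FiniteDimensional ℂ V] {f g : End ℂ V} {n : ℕ} (hn : n ≠ 0) (hf : f ^ n = 1)
    (hgf : g * f = 1) : LinearMap.trace ℂ V g = conj (LinearMap.trace ℂ V f) := by
  have htop := (End.isSemisimple_of_pow_eq_one hn hf).iSup_eigenspace_eq_top
  have hg : ∀ μ, ∀ x ∈ f.eigenspace μ, g x = conj μ • x := by
    intro μ x hx
    rcases eq_or_ne x 0 with rfl | hx0
    · simp
    have hv : f.HasEigenvector μ x := ⟨hx, hx0⟩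
    have hμn : μ ^ n = 1 := smul_left_injective (R := ℂ) hx0 <| by
      simpa [hf] using (hv.pow_apply n).symm
    have hμ0 : μ ≠ 0 := by rintro rfl; simp [hn] at hμn
    rw [← Complex.inv_eq_conj (Complex.norm_eq_one_of_pow_eq_one hμn hn), eq_inv_smul_iff₀ hμ0,
      ← map_smul, ← hv.apply_eq_smul, ← End.mul_apply, hgf, End.one_apply]
  have hf' : ∀ μ : ℂ, ∀ x ∈ f.eigenspace μ, f x = μ • x := fun _ _ => End.mem_eigenspace_iff.mp
  rw [End.trace_eq_sum_eigenvalues_of_mem_eigenspace htop _ hg,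
    End.trace_eq_sum_eigenvalues_of_mem_eigenspace htop (fun μ => μ) hf', map_sum]
  simp

theorem Representation.char_inv {G V : Type*} [Group G] [Finite G] [AddCommGroup V] [Module ℂ V]
    [FiniteDimensional ℂ V] (ρ : Representation ℂ G V) (g : G) :
    ρ.character g⁻¹ = conj (ρ.character g) :=
  LinearMap.trace_eq_conj_trace_of_pow_eq_one (orderOf_pos g).ne'
    (by rw [← map_pow, pow_orderOf_eq_one, map_one]) (by rw [← map_mul, inv_mul_cancel, map_one])

namespace Representation

theorem sum_eq_zero_of_invariants_eq_bot {k G V : Type*} [CommRing k] [Group G] [Fintype G]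
    [Invertible (Fintype.card G : k)] [AddCommGroup V] [Module k V] (ρ : Representation k G V)
    (h : invariants ρ = ⊥) : ∑ g, ρ g = 0 := by
  have hav : ρ.averageMap = 0 :=
    LinearMap.ext fun v => by simpa [h] using averageMap_invariant ρ v
  have : ρ.averageMap = ⅟(Fintype.card G : k) • ∑ g, ρ g := by
    simp [averageMap, GroupAlgebra.average, map_sum]
  rw [← smul_invOf_smul (Fintype.card G : k) (∑ g, ρ g), ← this, hav, smul_zero]

variable {k G V W : Type*} [Field k] [Group G] [AddCommGroup V] [Module k V]
  [AddCommGroup W] [Module k W] [FiniteDimensional k V] [FiniteDimensional k W]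

theorem trace_map_mul_tprod_dual (ρ : Representation k G V) (σ : Representation k G W)
    (x y g : G) :
    LinearMap.trace k _ (TensorProduct.map (ρ y) (Dual.transpose (σ x)) * tprod ρ (dual σ) g) =
      ρ.character (y * g) * σ.character (g⁻¹ * x) := by
  rw [tprod_apply, End.mul_eq_comp, ← TensorProduct.map_comp, LinearMap.trace_tensorProduct',
    dual_apply, ← Dual.transpose_comp, LinearMap.trace_transpose', ← End.mul_eq_comp,
    ← End.mul_eq_comp, ← map_mul, ← map_mul]
  rfl

theorem sum_character_mul_character_eq_zero [Fintype G] [Invertible (Fintype.card G : k)]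
    (ρ : Representation k G V) (σ : Representation k G W)
    (h : invariants (tprod ρ (dual σ)) = ⊥) (x y : G) :
    ∑ g, ρ.character (y * g) * σ.character (g⁻¹ * x) = 0 := by
  simp_rw [← trace_map_mul_tprod_dual, ← map_sum, ← Finset.mul_sum,
    sum_eq_zero_of_invariants_eq_bot _ h, mul_zero, map_zero]

end Representation

namespace FDRep

open Representation (invariants tprod dual)

variable {k G : Type*} [Field k] [IsAlgClosed k] [CharZero k] [Group G] [Fintype G]
  (V W : FDRep k G) [CategoryTheory.Simple V] [CategoryTheory.Simple W]

theorem invariants_tprod_dual_eq_bot (h : ¬Nonempty (V ≅ W)) :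
    invariants (tprod V.ρ (dual W.ρ)) = ⊥ := by
  have : Invertible (Nat.card G : k) := invertibleOfNonzero (Nat.cast_ne_zero.mpr Nat.card_pos.ne')
  have horth := char_orthonormal V W
  rw [if_neg h] at horth
  have hdim := Representation.card_inv_mul_sum_char_eq_finrank (tprod V.ρ (dual W.ρ))
  simp only [Representation.char_tensor, Pi.mul_apply, Representation.char_dual] at hdim
  rw [← Submodule.finrank_eq_zero]
  exact_mod_cast hdim.symm.trans horth

theorem sum_char_mul_char_eq_zero (h : ¬Nonempty (V ≅ W)) (x y : G) :
    ∑ g, V.character (y * g) * W.character (g⁻¹ * x) = 0 :=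
  have : Invertible (Fintype.card G : k) :=
    invertibleOfNonzero (Nat.cast_ne_zero.mpr Fintype.card_ne_zero)
  Representation.sum_character_mul_character_eq_zero _ _ (invariants_tprod_dual_eq_bot V W h) x y

end FDRep

def twoChar {G R : Type*} [Mul G] [Ring R] (χ : G → R) (g h : G) : R := χ g * χ h - χ (g * h)

theorem twoChar_inv_inv {G R : Type*} [Group G] [Ring R] [StarRing R] {χ : G → R}
    (hχ : ∀ g, χ g⁻¹ = star (χ g)) (g h : G) :
    twoChar χ h⁻¹ g⁻¹ = star (twoChar χ g h) := by
  simp only [twoChar, star_sub, star_mul, ← hχ, mul_inv_rev]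

theorem sum_twoChar_mul_twoChar_inv_inv_eq_zero {G R : Type*} [Group G] [Fintype G] [CommRing R]
    (a b : G → R) (hab : ∀ x y, ∑ g, a (y * g) * b (g⁻¹ * x) = 0) :
    ∑ g, ∑ h, twoChar a g h * twoChar b h⁻¹ g⁻¹ = 0 := by
  refine Finset.sum_eq_zero fun g _ => ?_
  have h₁ := hab 1 1
  have h₂ := hab g⁻¹ 1
  have h₃ := hab 1 g
  have h₄ := hab g⁻¹ g
  simp only [one_mul, mul_one] at h₁ h₂ h₃ h₄
  calc ∑ h, twoChar a g h * twoChar b h⁻¹ g⁻¹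
      = a g * b g⁻¹ * ∑ h, a h * b h⁻¹ - a g * ∑ h, a h * b (h⁻¹ * g⁻¹)
          - b g⁻¹ * ∑ h, a (g * h) * b h⁻¹ + ∑ h, a (g * h) * b (h⁻¹ * g⁻¹) := by
        simp only [twoChar, Finset.mul_sum, ← Finset.sum_sub_distrib, ← Finset.sum_add_distrib]
        exact Finset.sum_congr rfl fun h _ => by ring
    _ = 0 := by rw [h₁, h₂, h₃, h₄]; ring

theorem stmt_9 {G : Type} [Group G] [Fintype G]
    (V W : FDRep ℂ G) [CategoryTheory.Simple V] [CategoryTheory.Simple W]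
    (h : ¬ Nonempty (V ≅ W)) :
    ∑ g : G, ∑ h' : G,
      (V.character g * V.character h' - V.character (g * h')) *
        starRingEnd ℂ (W.character g * W.character h' - W.character (g * h')) = 0 := by
  have hW : ∀ g, W.character g⁻¹ = star (W.character g) := Representation.char_inv W.ρ
  calc _ = ∑ g, ∑ h', twoChar V.character g h' * twoChar W.character h'⁻¹ g⁻¹ := by
        simp_rw [twoChar_inv_inv hW]; rfl
    _ = 0 := sum_twoChar_mul_twoChar_inv_inv_eq_zero _ _ (V.sum_char_mul_char_eq_zero W h)
end

section
/- For an abelian group G of order n and a field K containing a primitive n-th root of unity with char K ∤ n, the group determinant factors completely into linear forms: Θ_G = ∏_{χ} (∑_{g∈G} χ(g) x_g), where χ ranges over the n characters G → Kˣ. -/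
open MvPolynomial Matrix

/-- Sum of a nontrivial character over the group vanishes. -/
lemma char_sum_eq_zero {G K : Type*} [CommGroup G] [Fintype G] [Field K]
    {φ : G →* Kˣ} (h : φ ≠ 1) : ∑ g : G, (φ g : K) = 0 := by
  obtain ⟨h₀, hh⟩ : ∃ a, φ a ≠ 1 := by
    by_contra hc; push_neg at hc; exact h (MonoidHom.ext fun a => hc a)
  have key : (φ h₀ : K) * ∑ g : G, (φ g : K) = ∑ g : G, (φ g : K) := by
    rw [Finset.mul_sum]
    exact Fintype.sum_equiv (Equiv.mulLeft h₀) _ _ (fun g => by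
      simp [_root_.map_mul, Units.val_mul])
  have h1 : ((φ h₀ : K) - 1) * ∑ g : G, (φ g : K) = 0 := by
    rw [sub_mul, one_mul, key, sub_self]
  have h2 : (φ h₀ : K) - 1 ≠ 0 := by
    intro hc
    apply hh
    ext
    rw [sub_eq_zero] at hc
    simpa using hc
  exact (mul_eq_zero.mp h1).resolve_left h2

theorem stmt_13 {G : Type*} [CommGroup G] [Fintype G] [DecidableEq G]
    {K : Type*} [Field K] [Fintype (G →* Kˣ)]
    (hroot : ∃ ζ : K, IsPrimitiveRoot ζ (Fintype.card G))
    (hchar : ¬ (ringChar K ∣ Fintype.card G)) :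
    (Matrix.of fun g h : G => (MvPolynomial.X (g * h⁻¹) : MvPolynomial G K)).det
      = ∏ χ : G →* Kˣ, ∑ g : G, MvPolynomial.C (χ g : K) * MvPolynomial.X g := by
  classical
  have hn : NeZero (Fintype.card G) := ⟨Fintype.card_ne_zero⟩
  have i1 : HasEnoughRootsOfUnity K (Fintype.card G) := ⟨hroot, inferInstance⟩
  have i2 : HasEnoughRootsOfUnity K (Monoid.exponent G) :=
    HasEnoughRootsOfUnity.of_dvd K Group.exponent_dvd_card
  obtain ⟨e⟩ := CommGroup.monoidHom_mulEquiv_of_hasEnoughRootsOfUnity G K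
  set R := MvPolynomial G K
  set χ : G → (G →* Kˣ) := fun i => e.symm i with hχ
  have hχinj : Function.Injective χ := e.symm.injective
  set M : Matrix G G R :=
    Matrix.of fun g h : G => (MvPolynomial.X (g * h⁻¹) : MvPolynomial G K) with hM
  set P : Matrix G G R := Matrix.of fun g i => MvPolynomial.C ((χ i g : K)) with hP
  set Q : Matrix G G R := Matrix.of fun i g => MvPolynomial.C ((χ i g⁻¹ : K)) with hQ
  -- orthogonality: Q * P = n • 1
  have hQP : Q * P = ((Fintype.card G : R)) • 1 := by
    refine Matrix.ext fun i j => ?_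
    simp only [Matrix.mul_apply, Matrix.smul_apply, Matrix.one_apply, hP, hQ,
      Matrix.of_apply, smul_eq_mul]
    have key : ∀ g : G, (MvPolynomial.C ((χ i g⁻¹ : K)) * MvPolynomial.C ((χ j g : K)) : R)
        = MvPolynomial.C ((((χ i)⁻¹ * χ j) g : K)) := by
      intro g
      rw [← _root_.map_mul]
      congr 1
      rw [MonoidHom.mul_apply, MonoidHom.inv_apply, Units.val_mul, ← map_inv (χ i) g]
    rw [Finset.sum_congr rfl fun g _ => key g, ← map_sum]
    rcases eq_or_ne i j with rfl | hij
    · simp [Finset.card_univ]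
    · have hne : (χ i)⁻¹ * χ j ≠ 1 := fun hc => hij (hχinj (inv_mul_eq_one.mp hc))
      rw [char_sum_eq_zero hne]
      simp [hij]
  -- eigenvalues
  set d : G → R := fun i => ∑ k : G, MvPolynomial.C (((χ i)⁻¹ k : K)) * MvPolynomial.X k
    with hd
  have hXP : M * P = P * Matrix.diagonal d := by
    refine Matrix.ext fun g j => ?_
    rw [Matrix.mul_diagonal, Matrix.mul_apply]
    simp only [hM, hP, hd, Matrix.of_apply]
    rw [Finset.mul_sum]
    refine Fintype.sum_equiv ((Equiv.inv G).trans (Equiv.mulLeft g)) _ _ (fun h => ?_)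
    simp only [Equiv.trans_apply, Equiv.inv_apply, Equiv.coe_mulLeft]
    have hKx : χ j g * (χ j)⁻¹ (g * h⁻¹) = χ j h := by
      simp [MonoidHom.inv_apply, _root_.map_mul, map_inv, mul_inv]
    rw [← hKx, Units.val_mul, _root_.map_mul]
    ring
  -- P.det ≠ 0
  have hPne : P.det ≠ 0 := by
    intro h0
    have hdQP := congrArg Matrix.det hQP
    rw [Matrix.det_mul, h0, mul_zero, Matrix.det_smul, Matrix.det_one, mul_one] at hdQP
    have hnK : ((Fintype.card G : ℕ) : K) ≠ 0 := fun h => hchar ((ringChar.spec K _).mp h)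
    have hnR : ((Fintype.card G : ℕ) : R) ≠ 0 := by
      rw [← map_natCast (MvPolynomial.C : K →+* R), Ne, MvPolynomial.C_eq_zero]
      exact hnK
    exact pow_ne_zero _ hnR hdQP.symm
  -- conclude
  have hdet : P.det * M.det = P.det * ∏ i : G, d i := by
    rw [mul_comm (P.det), ← Matrix.det_mul, hXP, Matrix.det_mul, Matrix.det_diagonal]
  have hMdet : M.det = ∏ i : G, d i := mul_left_cancel₀ hPne hdet
  rw [hMdet]
  have step1 : ∏ i : G, d i
      = ∏ ψ : G →* Kˣ, ∑ k : G, MvPolynomial.C ((ψ⁻¹ k : K)) * MvPolynomial.X k :=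
    Equiv.prod_comp e.symm.toEquiv
      (fun ψ : G →* Kˣ => ∑ k : G, MvPolynomial.C ((ψ⁻¹ k : K)) * MvPolynomial.X k)
  have step2 := Equiv.prod_comp (Equiv.inv (G →* Kˣ))
      (fun ψ : G →* Kˣ => ∑ k : G, MvPolynomial.C ((ψ k : K)) * MvPolynomial.X k)
  rw [step1]
  exact step2
end

section
/- Let G and H be finite groups whose complex group algebras are isomorphic as algebras with a given bijection f : G → H between the bases such that f(g)f(h) + f(h)f(g) = f(gh) + f(hg) in ℂ[H] for all g, h ∈ G (i.e., the symmetrized multiplication tables agree under f). Then G ≅ H. -/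
/-!
Since group elements are linearly independent in `k[H]` and `2 ≠ 0` in `k`, the identity
`f g * f h + f h * f g = f (g * h) + f (h * g)` says that `f (g * h)` and `f (h * g)` are
`f g * f h` and `f h * f g` in some order. A map with this property is a homomorphism or an
antihomomorphism (an exercise in Bourbaki, Algebra I; cf. Scott's theorem on
half-homomorphisms): for each `a`, the map is multiplicative or antimultiplicative on all
products `a * y`, and the two kinds of `a` form subgroups, one of which must be everything.
An antiisomorphism composed with inversion is an isomorphism.
-/

def PreservesSymmMul {G H : Type*} [Mul G] [Mul H] (φ : G → H) : Prop :=
  ∀ x y, (φ (x * y) = φ x * φ y ∧ φ (y * x) = φ y * φ x) ∨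
    (φ (x * y) = φ y * φ x ∧ φ (y * x) = φ x * φ y)

theorem PreservesSymmMul.of_monoidAlgebra_of {k G H : Type*} [Semiring k] [NeZero (2 : k)]
    [Mul G] [MulOneClass H] (φ : G → H)
    (h : ∀ x y, MonoidAlgebra.of k H (φ x) * MonoidAlgebra.of k H (φ y)
        + MonoidAlgebra.of k H (φ y) * MonoidAlgebra.of k H (φ x)
        = MonoidAlgebra.of k H (φ (x * y)) + MonoidAlgebra.of k H (φ (y * x))) :
    PreservesSymmMul φ := by
  have h1 : (1 : k) ≠ 0 := fun h ↦
    two_ne_zero (by rw [← one_add_one_eq_two, h, add_zero] : (2 : k) = 0)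
  intro x y
  specialize h x y
  rw [← map_mul, ← map_mul] at h
  simp only [MonoidAlgebra.of_apply, MonoidAlgebra.single_add_single_inj h1 h1,
    one_add_one_eq_two, two_ne_zero] at h
  grind

theorem mul_mul_ne_mul_mul_of_not_commute {M : Type*} [CancelMonoid M] {A B C : M}
    (hAB : ¬Commute A B) (hAC : ¬Commute A C) (h : Commute B C ∨ C * A * B = B * A * C) :
    A * B * C ≠ C * A * B ∧ B * C * A ≠ C * A * B := by
  rcases h with h | h
  · constructor <;> intro e
    · rw [mul_assoc, h.eq, ← mul_assoc] at e
      exact hAC (mul_right_cancel e)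
    · rw [h.eq, mul_assoc, mul_assoc] at e
      exact hAB (mul_left_cancel e).symm
  · constructor <;> intro e
    · rw [h] at e
      exact hAB (mul_right_cancel e)
    · rw [h, mul_assoc, mul_assoc] at e
      exact hAC (mul_left_cancel e).symm

section Group

variable {G H : Type*} [Group G] [Group H]

theorem PreservesSymmMul.forall_mul_eq_or_forall_mul_eq {φ : G → H} (hφ : PreservesSymmMul φ)
    (a : G) :
    (∀ y, φ (a * y) = φ a * φ y) ∨ (∀ y, φ (a * y) = φ y * φ a) := by
  -- evaluate `φ` on `c * a * b`, `a * b * c` and `a * b * c * a` along two bracketings each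
  by_contra! ⟨⟨c, hc⟩, ⟨b, hb⟩⟩
  have mem x y : φ (x * y) = φ x * φ y ∨ φ (x * y) = φ y * φ x :=
    (hφ x y).imp And.left And.left
  obtain ⟨hab, -⟩ := (hφ a b).resolve_right (hb ·.1)
  obtain ⟨hac, hca⟩ := (hφ a c).resolve_left (hc ·.1)
  have hAB : φ a * φ b ≠ φ b * φ a := fun e ↦ hb (hab.trans e)
  have hAC : φ a * φ c ≠ φ c * φ a := fun e ↦ hc (hac.trans e.symm)
  have hcab : φ b * φ c = φ c * φ b ∨ φ c * φ a * φ b = φ b * φ a * φ c := by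
    have h1 := mem c (a * b); have h2 := mem (c * a) b
    rw [← mul_assoc, hab] at h1
    rw [hca] at h2
    rcases h1 with h1 | h1 <;> rcases h2 with h2 | h2 <;> rw [h1] at h2 <;>
      (try simp only [mul_assoc, mul_right_inj] at h2) <;>
      (try simp only [← mul_assoc, mul_left_inj] at h2) <;> grind
  obtain ⟨hABC, hBCA⟩ := mul_mul_ne_mul_mul_of_not_commute hAB hAC hcab
  have habc : φ (a * b * c) = φ a * φ b * φ c := by
    have h1 := mem (a * b) c; have h2 := mem a (b * c); have h3 := mem b c
    rw [hab] at h1; rw [← mul_assoc] at h2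
    rcases h1 with h1 | h1 <;> rcases h2 with h2 | h2 <;> rcases h3 with h3 | h3 <;>
      rw [h1, h3] at h2 <;>
      (try simp only [mul_assoc, mul_right_inj] at h2) <;>
      (try simp only [← mul_assoc, mul_left_inj] at h2) <;> grind
  have h1 := mem (a * b * c) a; have h2 := mem (a * b) (c * a)
  rw [habc] at h1; rw [hab, hca, ← mul_assoc, ← mul_assoc] at h2
  rcases h1 with h1 | h1 <;> rcases h2 with h2 | h2 <;> rw [h1] at h2 <;>
    (try simp only [mul_assoc, mul_right_inj] at h2) <;>
    (try simp only [← mul_assoc, mul_left_inj] at h2) <;> grind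

def homLocus (φ : G → H) (hφ : φ 1 = 1) : Subgroup G where
  carrier := {a | ∀ y, φ (a * y) = φ a * φ y}
  one_mem' y := by rw [one_mul, hφ, one_mul]
  mul_mem' {a b} ha hb y := by rw [mul_assoc, ha, hb, ha, mul_assoc]
  inv_mem' {a} ha y := by
    have key y : φ (a⁻¹ * y) = (φ a)⁻¹ * φ y := by
      rw [eq_inv_mul_iff_mul_eq, ← ha, mul_inv_cancel_left]
    have hinv : φ a⁻¹ = (φ a)⁻¹ := by simpa [hφ] using key 1
    rw [key, hinv]

theorem PreservesSymmMul.map_one {φ : G → H} (hφ : PreservesSymmMul φ) : φ 1 = 1 := by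
  have := (hφ 1 1).elim And.left And.left
  rwa [mul_one, left_eq_mul] at this

theorem PreservesSymmMul.isHom_or_isAntiHom {φ : G → H} (hφ : PreservesSymmMul φ) :
    (∀ x y, φ (x * y) = φ x * φ y) ∨ (∀ x y, φ (x * y) = φ y * φ x) := by
  -- a group is not the union of two proper subgroups
  let P := homLocus φ hφ.map_one
  let Q := homLocus (MulOpposite.op ∘ φ) (by simp [hφ.map_one])
  have hPQ : ((⊤ : Subgroup G) : Set G) ⊆ P ∪ Q := fun a _ ↦
    (hφ.forall_mul_eq_or_forall_mul_eq a).imp id fun h y ↦ by simp [h]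
  refine (SubgroupClass.subset_union.mp hPQ).imp (fun hP x y ↦ ?_) (fun hQ x y ↦ ?_)
  · exact hP (Subgroup.mem_top x) y
  · simpa [← MulOpposite.op_mul] using hQ (Subgroup.mem_top x) y

end Group

theorem stmt_15_general {G H : Type*} [Group G] [Group H]
    (f : G ≃ H)
    (h : ∀ g h' : G,
      MonoidAlgebra.of ℂ H (f g) * MonoidAlgebra.of ℂ H (f h')
        + MonoidAlgebra.of ℂ H (f h') * MonoidAlgebra.of ℂ H (f g)
        = MonoidAlgebra.of ℂ H (f (g * h')) + MonoidAlgebra.of ℂ H (f (h' * g))) :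
    Nonempty (G ≃* H) := by
  obtain hom | antiHom := (PreservesSymmMul.of_monoidAlgebra_of f h).isHom_or_isAntiHom
  · exact ⟨{ f with map_mul' := hom }⟩
  · let e : G ≃* Hᵐᵒᵖ :=
      { f.trans MulOpposite.opEquiv with map_mul' x y := by simp [antiHom] }
    exact ⟨e.trans (MulEquiv.inv' H).symm⟩

theorem stmt_15 {G H : Type*} [Group G] [Group H] [Finite G] [Finite H]
    (f : G ≃ H)
    (h : ∀ g h' : G,
      MonoidAlgebra.of ℂ H (f g) * MonoidAlgebra.of ℂ H (f h')
        + MonoidAlgebra.of ℂ H (f h') * MonoidAlgebra.of ℂ H (f g)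
        = MonoidAlgebra.of ℂ H (f (g * h')) + MonoidAlgebra.of ℂ H (f (h' * g))) :
    Nonempty (G ≃* H) :=
  stmt_15_general f h
end
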